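/- On the face U = 3/4 of the cube (with any V, Ω ∈ [0,1]), the U-component of the vector field F equals −(3/64)·Υ(Ω)(1 + σ(Ω))(1 + 3σ(Ω))·V ≤ 0. Consequently the region {(U,V,Ω) ∈ [0,1]³ : U ≤ 3/4} is positively invariant: every solution with values in [0,1]³ satisfying U(λ₀) ≤ 3/4 satisfies U(λ) ≤ 3/4 for all λ ≥ λ₀. -/
import Mathlib


open Set

/-- `H(U,V,Ω) = (1+σ(Ω))V(1−U+σ(Ω)U)`. -/
noncomputable def Hfun (σ : ℝ → ℝ) (U V W : ℝ) : ℝ :=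
  (1 + σ W) * V * (1 - U + σ W * U)

/-- The vector field `F` on the cube `[0,1]³` in coordinates `(U,V,Ω)`. -/
noncomputable def Ffield (Υ σ f : ℝ → ℝ) (U V W : ℝ) : ℝ × ℝ × ℝ :=
  (U * (1 - U) * ((1 - V) * (3 - 4 * U) - Υ W * Hfun σ U V W),
   V * (1 - V) * ((2 * U - 1) * (1 - V + 2 * σ W * V) + (1 - Υ W) * Hfun σ U V W),
   -(f W) * W * (1 - W) * Hfun σ U V W)

/-- On the face `U = 3/4` the `U`-component of `F` equals
`−(3/64)·Υ(Ω)(1+σ(Ω))(1+3σ(Ω))·V ≤ 0`; consequently the region `{U ≤ 3/4}` of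
the cube is positively invariant. -/
theorem stmt7
    (Υ σ f : ℝ → ℝ)
    (hΥ : ContDiffOn ℝ 1 Υ (Icc 0 1)) (hσ : ContDiffOn ℝ 1 σ (Icc 0 1))
    (hf : ContDiffOn ℝ 1 f (Icc 0 1))
    (hfpos : ∀ x ∈ Icc (0:ℝ) 1, 0 < f x)
    (hσnonneg : ∀ x ∈ Icc (0:ℝ) 1, 0 ≤ σ x)
    (hΥnonneg : ∀ x ∈ Icc (0:ℝ) 1, 0 ≤ Υ x) :
    (∀ V ∈ Icc (0:ℝ) 1, ∀ W ∈ Icc (0:ℝ) 1,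
      (Ffield Υ σ f (3 / 4) V W).1 =
        -(3 / 64) * Υ W * (1 + σ W) * (1 + 3 * σ W) * V ∧
      -(3 / 64) * Υ W * (1 + σ W) * (1 + 3 * σ W) * V ≤ 0) ∧
    (∀ U V W : ℝ → ℝ,
      (∀ l : ℝ, HasDerivAt U (Ffield Υ σ f (U l) (V l) (W l)).1 l) →
      (∀ l : ℝ, HasDerivAt V (Ffield Υ σ f (U l) (V l) (W l)).2.1 l) →
      (∀ l : ℝ, HasDerivAt W (Ffield Υ σ f (U l) (V l) (W l)).2.2 l) →
      (∀ l : ℝ, U l ∈ Icc (0:ℝ) 1 ∧ V l ∈ Icc (0:ℝ) 1 ∧ W l ∈ Icc (0:ℝ) 1) →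
      ∀ l₀ l : ℝ, U l₀ ≤ 3 / 4 → l₀ ≤ l → U l ≤ 3 / 4) := by
  constructor
  · intro V hV W hW
    constructor
    · simp only [Ffield, Hfun]; ring
    · have h1 : (0:ℝ) ≤ Υ W := hΥnonneg W hW
      have h2 : (0:ℝ) ≤ σ W := hσnonneg W hW
      have h3 : (0:ℝ) ≤ V := hV.1
      nlinarith [mul_nonneg (mul_nonneg (mul_nonneg h1 (by linarith : (0:ℝ) ≤ 1 + σ W))
        (by linarith : (0:ℝ) ≤ 1 + 3 * σ W)) h3]
  · intro U V W hU hV hW hcube l₀ l hU0 hll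
    -- key: if U t ≥ 3/4 then U' t ≤ 0
    have key : ∀ t : ℝ, 3 / 4 ≤ U t → (Ffield Υ σ f (U t) (V t) (W t)).1 ≤ 0 := by
      intro t ht
      obtain ⟨hUt, hVt, hWt⟩ := hcube t
      have h1 : (0:ℝ) ≤ Υ (W t) := hΥnonneg _ hWt
      have h2 : (0:ℝ) ≤ σ (W t) := hσnonneg _ hWt
      have hH : 0 ≤ Hfun σ (U t) (V t) (W t) := by
        unfold Hfun
        have hc : (0:ℝ) ≤ 1 - U t + σ (W t) * U t := by nlinarith [hUt.1, hUt.2]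
        exact mul_nonneg (mul_nonneg (by linarith) hVt.1) hc
      simp only [Ffield]
      have hA : (0:ℝ) ≤ U t * (1 - U t) := by nlinarith [hUt.1, hUt.2]
      have hB : (1 - V t) * (3 - 4 * U t) - Υ (W t) * Hfun σ (U t) (V t) (W t) ≤ 0 := by
        have : (1 - V t) * (3 - 4 * U t) ≤ 0 := by nlinarith [hVt.2]
        nlinarith
      exact mul_nonpos_of_nonneg_of_nonpos hA hB
    have hdiff : Differentiable ℝ U := fun t => (hU t).differentiableAt
    have hcontU : Continuous U := hdiff.continuous
    by_contra hcon
    push_neg at hcon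
    -- last time ≤ l at which U ≤ 3/4
    set S : Set ℝ := {t | t ∈ Icc l₀ l ∧ U t ≤ 3 / 4} with hS
    have hne : S.Nonempty := ⟨l₀, ⟨le_refl _, hll⟩, hU0⟩
    have hbdd : BddAbove S := ⟨l, fun t ht => ht.1.2⟩
    set s := sSup S with hs
    have hsmem : s ∈ Icc l₀ l := by
      constructor
      · exact le_csSup hbdd ⟨⟨le_refl _, hll⟩, hU0⟩
      · exact csSup_le hne fun t ht => ht.1.2
    have hUs : U s ≤ 3 / 4 := by
      have hclosed : IsClosed {t : ℝ | U t ≤ 3 / 4} := isClosed_le hcontU continuous_const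
      have : s ∈ closure S := csSup_mem_closure hne hbdd
      have : s ∈ closure {t : ℝ | U t ≤ 3 / 4} :=
        closure_mono (fun t ht => ht.2) this
      rwa [hclosed.closure_eq] at this
    have hsl : s < l := lt_of_le_of_ne hsmem.2 (by
      intro h; rw [h] at hUs; exact absurd hUs (not_le.mpr hcon))
    -- on (s, l], U > 3/4
    have hgt : ∀ t, s < t → t ≤ l → 3 / 4 < U t := by
      intro t hst htl
      by_contra h
      push_neg at h
      have : t ∈ S := ⟨⟨le_trans hsmem.1 hst.le, htl⟩, h⟩
      exact absurd (le_csSup hbdd this) (not_le.mpr hst)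
    -- U is antitone on [s, l]
    have hanti : AntitoneOn U (Icc s l) := by
      apply antitoneOn_of_deriv_nonpos (convex_Icc s l) hcontU.continuousOn
        (hdiff.differentiableOn)
      intro t ht
      rw [interior_Icc] at ht
      rw [(hU t).deriv]
      exact key t (hgt t ht.1 ht.2.le).le
    have := hanti ⟨le_refl s, hsl.le⟩ ⟨hsl.le, le_refl l⟩ hsl.le
    linarith
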